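/- arXiv:2206.14698 — 5 statements merged into one kernel-verified Lean document; each statement's English description precedes it below -/
import Mathlib

section
/- Let G be a graph with no isolated vertices in which every vertex has degree at most k, and suppose G has a vertex cover of size at most k. Then G has at most k^2 + k vertices and at most k^2 edges. -/
open SimpleGraph

/-- `G` has a vertex cover of size at most `k`. -/
def HasVCLE {V : Type*} (G : SimpleGraph V) (k : ℕ) : Prop :=
  ∃ S : Set V, S.Finite ∧ (∀ ⦃a b : V⦄, G.Adj a b → a ∈ S ∨ b ∈ S) ∧ S.ncard ≤ k

/-- Delete a set of vertices: same vertex set, all incident edges removed. -/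
def delVerts {V : Type*} (G : SimpleGraph V) (D : Set V) : SimpleGraph V where
  Adj a b := G.Adj a b ∧ a ∉ D ∧ b ∉ D
  symm := ⟨fun a b h => ⟨h.1.symm, h.2.2, h.2.1⟩⟩
  loopless := ⟨fun a h => G.irrefl h.1⟩

private lemma ncard_biUnion_le {α β : Type*} (t : Finset α) (f : α → Set β)
    (hf : ∀ a ∈ t, (f a).Finite) :
    (⋃ a ∈ t, f a).ncard ≤ ∑ a ∈ t, (f a).ncard := by
  classical
  have hfin : (⋃ a ∈ t, f a).Finite := Set.Finite.biUnion t.finite_toSet hf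
  have hsub : hfin.toFinset ⊆ t.biUnion (fun a => if h : a ∈ t then (hf a h).toFinset else ∅) := by
    intro x hx
    simp only [Set.Finite.mem_toFinset, Set.mem_iUnion] at hx
    obtain ⟨a, ha, hxa⟩ := hx
    simp only [Finset.mem_biUnion]
    exact ⟨a, ha, by simp [ha, Set.Finite.mem_toFinset, hxa]⟩
  calc (⋃ a ∈ t, f a).ncard = hfin.toFinset.card :=
        Set.ncard_eq_toFinset_card _ hfin
    _ ≤ (t.biUnion (fun a => if h : a ∈ t then (hf a h).toFinset else ∅)).card :=
        Finset.card_le_card hsub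
    _ ≤ ∑ a ∈ t, (if h : a ∈ t then (hf a h).toFinset else ∅).card :=
        Finset.card_biUnion_le
    _ = ∑ a ∈ t, (f a).ncard := by
        apply Finset.sum_congr rfl
        intro a ha
        rw [dif_pos ha, ← Set.ncard_eq_toFinset_card _ (hf a ha)]

/-- Buss kernel size bound: a graph without isolated vertices, maximum degree at most k,
and a vertex cover of size at most k has at most k² + k vertices and k² edges. -/
theorem buss_kernel_bound {V : Type*} [Fintype V] (G : SimpleGraph V) (k : ℕ)
    (hno_iso : ∀ v : V, ∃ w : V, G.Adj v w)
    (hmaxdeg : ∀ v : V, (G.neighborSet v).ncard ≤ k)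
    (hvc : HasVCLE G k) :
    Fintype.card V ≤ k ^ 2 + k ∧ G.edgeSet.ncard ≤ k ^ 2 := by
  classical
  obtain ⟨S, hSfin, hcov, hScard⟩ := hvc
  set t : Finset V := hSfin.toFinset with ht
  have htcard : t.card ≤ k := (Set.ncard_eq_toFinset_card _ hSfin) ▸ hScard
  have hmemt : ∀ v, v ∈ t ↔ v ∈ S := fun v => hSfin.mem_toFinset
  constructor
  · -- vertex bound
    have hsub : (Set.univ : Set V) ⊆ S ∪ ⋃ s ∈ t, G.neighborSet s := by
      intro v _
      by_cases hv : v ∈ S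
      · exact Or.inl hv
      · obtain ⟨w, hw⟩ := hno_iso v
        have hwS : w ∈ S := (hcov hw).resolve_left hv
        refine Or.inr ?_
        simp only [Set.mem_iUnion]
        exact ⟨w, (hmemt w).2 hwS, hw.symm⟩
    have h1 : (Set.univ : Set V).ncard ≤ (S ∪ ⋃ s ∈ t, G.neighborSet s).ncard :=
      Set.ncard_le_ncard hsub (Set.toFinite _)
    have h2 : (S ∪ ⋃ s ∈ t, G.neighborSet s).ncard ≤ S.ncard + (⋃ s ∈ t, G.neighborSet s).ncard :=
      Set.ncard_union_le _ _
    have h3 : (⋃ s ∈ t, G.neighborSet s).ncard ≤ ∑ s ∈ t, (G.neighborSet s).ncard :=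
      ncard_biUnion_le t _ (fun a _ => Set.toFinite _)
    have h4 : ∑ s ∈ t, (G.neighborSet s).ncard ≤ ∑ _s ∈ t, k :=
      Finset.sum_le_sum fun s _ => hmaxdeg s
    have h5 : ∑ _s ∈ t, k = t.card * k := by simp [Finset.sum_const, mul_comm]
    have : Fintype.card V = (Set.univ : Set V).ncard := by
      rw [Set.ncard_univ, Nat.card_eq_fintype_card]
    rw [this]
    calc (Set.univ : Set V).ncard ≤ S.ncard + (⋃ s ∈ t, G.neighborSet s).ncard :=
          le_trans h1 h2
      _ ≤ k + t.card * k := by omega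
      _ ≤ k + k * k := by nlinarith
      _ = k ^ 2 + k := by ring
  · -- edge bound
    have hsub : G.edgeSet ⊆ ⋃ s ∈ t, G.incidenceSet s := by
      intro e he
      induction e with
      | h a b =>
        have hab : G.Adj a b := he
        simp only [Set.mem_iUnion]
        rcases hcov hab with h | h
        · exact ⟨a, (hmemt a).2 h, he, Sym2.mem_mk_left a b⟩
        · exact ⟨b, (hmemt b).2 h, he, Sym2.mem_mk_right a b⟩
    have hinc : ∀ v : V, (G.incidenceSet v).ncard ≤ k := by
      intro v
      have : (G.incidenceSet v).ncard = (G.neighborSet v).ncard := by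
        rw [← Nat.card_coe_set_eq, ← Nat.card_coe_set_eq]
        exact Nat.card_congr (G.incidenceSetEquivNeighborSet v)
      rw [this]; exact hmaxdeg v
    calc G.edgeSet.ncard ≤ (⋃ s ∈ t, G.incidenceSet s).ncard :=
          Set.ncard_le_ncard hsub (Set.toFinite _)
      _ ≤ ∑ s ∈ t, (G.incidenceSet s).ncard :=
          ncard_biUnion_le t _ (fun a _ => Set.toFinite _)
      _ ≤ ∑ _s ∈ t, k := Finset.sum_le_sum fun s _ => hinc s
      _ = t.card * k := by simp [Finset.sum_const, mul_comm]
      _ ≤ k * k := by nlinarith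
      _ = k ^ 2 := by ring
end

section
/- Let G be a simple undirected graph, v any vertex, and let G' be obtained from G by replacing v with three vertices v, a, b, where a and b are non-adjacent, N_{G'}(a) ∪ N_{G'}(b) restricted to the original vertices equals N_G(v), and v is adjacent in G' exactly to a and b. Then G has a vertex cover of size at most k if and only if G' has a vertex cover of size at most k + 1. -/
open SimpleGraph

/-- Vertex splitting (Backward Degree-2 Folding): v is replaced by v, a, b where
a = Sum.inr true and b = Sum.inr false are new non-adjacent vertices; a is adjacent
to A, b is adjacent to B (among the original vertices), and v is adjacent exactly
to a and b. All other adjacencies are unchanged. -/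
def splitGraph {V : Type*} (G : SimpleGraph V) (v : V) (A B : Set V) :
    SimpleGraph (V ⊕ Bool) where
  Adj x y := match x, y with
    | Sum.inl x, Sum.inl y => G.Adj x y ∧ x ≠ v ∧ y ≠ v
    | Sum.inl x, Sum.inr t => x = v ∨ (t = true ∧ x ∈ A) ∨ (t = false ∧ x ∈ B)
    | Sum.inr t, Sum.inl x => x = v ∨ (t = true ∧ x ∈ A) ∨ (t = false ∧ x ∈ B)
    | Sum.inr _, Sum.inr _ => False
  symm := ⟨fun x y h => by
    cases x <;> cases y
    · exact ⟨h.1.symm, h.2.2, h.2.1⟩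
    · exact h
    · exact h
    · exact h⟩
  loopless := ⟨fun x h => by
    cases x
    · exact G.irrefl h.1
    · exact h⟩
private lemma vc_split_count {V : Type*} {T : Set (V ⊕ Bool)} (hT : T.Finite) :
    {x | Sum.inl x ∈ T}.ncard + {t : Bool | Sum.inr t ∈ T}.ncard = T.ncard := by
  have h1 : ({x | Sum.inl x ∈ T} : Set V).Finite :=
    hT.preimage (Sum.inl_injective.injOn)
  have h2 : ({t : Bool | Sum.inr t ∈ T} : Set Bool).Finite := Set.toFinite _
  have hdecomp : T = Sum.inl '' {x | Sum.inl x ∈ T} ∪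
      Sum.inr '' {t : Bool | Sum.inr t ∈ T} := by
    ext (x | t) <;> simp
  have hd : Disjoint (Sum.inl '' {x | Sum.inl x ∈ T})
      (Sum.inr '' {t : Bool | Sum.inr t ∈ T}) := by
    rw [Set.disjoint_left]
    rintro _ ⟨x, -, rfl⟩ ⟨t, -, ht⟩
    exact absurd ht (by simp)
  conv_rhs => rw [hdecomp]
  rw [Set.ncard_union_eq hd (h1.image _) (h2.image _),
    Set.ncard_image_of_injective _ Sum.inl_injective,
    Set.ncard_image_of_injective _ Sum.inr_injective]
/-- Backward Degree-2 Folding is safe: splitting any vertex v, distributing its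
neighborhood N(v) = A ∪ B among the two new vertices, increases the budget by 1. -/
theorem backward_degree2_folding_rule {V : Type*} (G : SimpleGraph V) (v : V)
    (A B : Set V) (k : ℕ) (hAB : A ∪ B = G.neighborSet v) :
    HasVCLE G k ↔ HasVCLE (splitGraph G v A B) (k + 1) := by
  constructor
  · rintro ⟨S, hSfin, hScov, hScard⟩
    by_cases hv : v ∈ S
    · refine ⟨insert (Sum.inr true) (insert (Sum.inr false) (Sum.inl '' (S \ {v}))),
        (((hSfin.diff).image _).insert _).insert _, ?_, ?_⟩
      · rintro (x | t) (y | s) hadj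
        · obtain ⟨h1, h2, h3⟩ := hadj
          rcases hScov h1 with h | h
          · exact Or.inl (by simp [Sum.inl_injective.eq_iff]; exact ⟨h, h2⟩)
          · exact Or.inr (by simp [Sum.inl_injective.eq_iff]; exact ⟨h, h3⟩)
        · right; cases s <;> simp
        · left; cases t <;> simp
        · exact absurd hadj id
      · have e1 : (S \ {v}).ncard + 1 = S.ncard :=
          Set.ncard_diff_singleton_add_one hv hSfin
        have e2 := Set.ncard_insert_le (Sum.inr false : V ⊕ Bool)
          (Sum.inl '' (S \ {v}))
        have e3 := Set.ncard_insert_le (Sum.inr true : V ⊕ Bool)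
          (insert (Sum.inr false) (Sum.inl '' (S \ {v})))
        have e4 : (Sum.inl '' (S \ {v}) : Set (V ⊕ Bool)).ncard = (S \ {v}).ncard :=
          Set.ncard_image_of_injective _ Sum.inl_injective
        omega
    · refine ⟨insert (Sum.inl v) (Sum.inl '' S), (hSfin.image _).insert _, ?_, ?_⟩
      · rintro (x | t) (y | s) hadj
        · obtain ⟨h1, -, -⟩ := hadj
          rcases hScov h1 with h | h
          · exact Or.inl (by simp [Sum.inl_injective.eq_iff]; right; exact h)
          · exact Or.inr (by simp [Sum.inl_injective.eq_iff]; right; exact h)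
        · left
          rcases hadj with rfl | ⟨-, hx⟩ | ⟨-, hx⟩
          · simp
          all_goals
          · have : x ∈ S := by
              have hxv : G.Adj v x := by
                have : x ∈ A ∪ B := by first | exact Or.inl hx | exact Or.inr hx
                rw [hAB] at this; exact this
              rcases hScov hxv with h | h
              · exact absurd h hv
              · exact h
            simp [Sum.inl_injective.eq_iff]; right; exact this
        · right
          rcases hadj with rfl | ⟨-, hx⟩ | ⟨-, hx⟩
          · simp
          all_goals
          · have : y ∈ S := by
              have hxv : G.Adj v y := by
                have : y ∈ A ∪ B := by first | exact Or.inl hx | exact Or.inr hx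
                rw [hAB] at this; exact this
              rcases hScov hxv with h | h
              · exact absurd h hv
              · exact h
            simp [Sum.inl_injective.eq_iff]; right; exact this
        · exact absurd hadj id
      · have e2 := Set.ncard_insert_le (Sum.inl v : V ⊕ Bool) (Sum.inl '' S)
        have e4 : (Sum.inl '' S : Set (V ⊕ Bool)).ncard = S.ncard :=
          Set.ncard_image_of_injective _ Sum.inl_injective
        omega
  · rintro ⟨T, hTfin, hTcov, hTcard⟩
    set S₀ : Set V := {x | Sum.inl x ∈ T} with hS₀
    have hS₀fin : S₀.Finite := hTfin.preimage (Sum.inl_injective.injOn)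
    have hcount := vc_split_count hTfin
    rw [← hS₀] at hcount
    -- edges within G away from v are covered by S₀
    have hcov' : ∀ ⦃x y : V⦄, G.Adj x y → x ≠ v → y ≠ v → x ∈ S₀ ∨ y ∈ S₀ := by
      intro x y h hx hy
      exact hTcov (show (splitGraph G v A B).Adj (Sum.inl x) (Sum.inl y) from ⟨h, hx, hy⟩)
    -- edges from v to a and b
    have hva := hTcov (show (splitGraph G v A B).Adj (Sum.inl v) (Sum.inr true) from Or.inl rfl)
    have hvb := hTcov (show (splitGraph G v A B).Adj (Sum.inl v) (Sum.inr false) from Or.inl rfl)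
    by_cases ht : Sum.inr true ∈ T <;> by_cases hf : Sum.inr false ∈ T
    · -- both new vertices in T: replace them by v
      refine ⟨insert v S₀, hS₀fin.insert _, ?_, ?_⟩
      · intro x y h
        by_cases hx : x = v
        · exact Or.inl (by simp [hx])
        by_cases hy : y = v
        · exact Or.inr (by simp [hy])
        rcases hcov' h hx hy with hh | hh
        · exact Or.inl (Set.mem_insert_of_mem _ hh)
        · exact Or.inr (Set.mem_insert_of_mem _ hh)
      · have hB : {t : Bool | Sum.inr t ∈ T} = Set.univ := by
          ext t; cases t <;> simp [hf, ht]
        have : ({t : Bool | Sum.inr t ∈ T} : Set Bool).ncard = 2 := by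
          rw [hB]; simp [Set.ncard_univ]
        have := Set.ncard_insert_le v S₀
        omega
    · -- only a ∈ T : edge v-b forces v ∈ T, use S₀
      have hvS : v ∈ S₀ := by rcases hvb with h | h; exact h; exact absurd h hf
      refine ⟨S₀, hS₀fin, ?_, ?_⟩
      · intro x y h
        by_cases hx : x = v
        · exact Or.inl (hx ▸ hvS)
        by_cases hy : y = v
        · exact Or.inr (hy ▸ hvS)
        exact hcov' h hx hy
      · have hB : {t : Bool | Sum.inr t ∈ T} = {true} := by
          ext t; cases t <;> simp [hf, ht]
        have : ({t : Bool | Sum.inr t ∈ T} : Set Bool).ncard = 1 := by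
          rw [hB]; simp
        omega
    · -- only b ∈ T : edge v-a forces v ∈ T, use S₀
      have hvS : v ∈ S₀ := by rcases hva with h | h; exact h; exact absurd h ht
      refine ⟨S₀, hS₀fin, ?_, ?_⟩
      · intro x y h
        by_cases hx : x = v
        · exact Or.inl (hx ▸ hvS)
        by_cases hy : y = v
        · exact Or.inr (hy ▸ hvS)
        exact hcov' h hx hy
      · have hB : {t : Bool | Sum.inr t ∈ T} = {false} := by
          ext t; cases t <;> simp [hf, ht]
        have : ({t : Bool | Sum.inr t ∈ T} : Set Bool).ncard = 1 := by
          rw [hB]; simp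
        omega
    · -- neither a nor b in T: all of N(v) and v are in S₀; use S₀ \ {v}
      have hvS : v ∈ S₀ := by rcases hva with h | h; exact h; exact absurd h ht
      have hN : ∀ x ∈ A ∪ B, x ∈ S₀ := by
        rintro x (hx | hx)
        · rcases hTcov (show (splitGraph G v A B).Adj (Sum.inl x) (Sum.inr true) from
            Or.inr (Or.inl ⟨rfl, hx⟩)) with h | h
          · exact h
          · exact absurd h ht
        · rcases hTcov (show (splitGraph G v A B).Adj (Sum.inl x) (Sum.inr false) from
            Or.inr (Or.inr ⟨rfl, hx⟩)) with h | h
          · exact h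
          · exact absurd h hf
      refine ⟨S₀ \ {v}, hS₀fin.diff, ?_, ?_⟩
      · intro x y h
        by_cases hx : x = v
        · subst hx
          refine Or.inr ⟨hN y ?_, G.ne_of_adj h.symm⟩
          rw [hAB]; exact h
        by_cases hy : y = v
        · subst hy
          refine Or.inl ⟨hN x ?_, G.ne_of_adj h⟩
          rw [hAB]; exact h.symm
        rcases hcov' h hx hy with hh | hh
        · exact Or.inl ⟨hh, hx⟩
        · exact Or.inr ⟨hh, hy⟩
      · have e1 : (S₀ \ {v}).ncard + 1 = S₀.ncard :=
          Set.ncard_diff_singleton_add_one hvS hS₀fin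
        omega
end

section
/- Let G be a simple undirected graph with distinct vertices a, b, c such that {a,b} ∈ E, c is adjacent to exactly one of a or b, and N(c) ⊆ N(a) ∪ N(b). Then G has a vertex cover of size at most k if and only if G with the edge {a,b} deleted has a vertex cover of size at most k. -/
open SimpleGraph

private lemma oed_aux {V : Type*} (G : SimpleGraph V) (a b c : V) (k : ℕ)
    (hca : c ≠ a) (hcb : c ≠ b)
    (h1 : G.Adj c a) (h2 : ¬ G.Adj c b)
    (hsub : G.neighborSet c ⊆ G.neighborSet a ∪ G.neighborSet b) :
    HasVCLE (G.deleteEdges {s(a, b)}) k → HasVCLE G k := by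
  rintro ⟨S, hfin, hcov, hcard⟩
  have hadj' : ∀ ⦃u v : V⦄, G.Adj u v → ¬(u = a ∧ v = b) → ¬(u = b ∧ v = a) →
      u ∈ S ∨ v ∈ S := by
    intro u v huv hne1 hne2
    apply hcov
    rw [SimpleGraph.deleteEdges_adj]
    refine ⟨huv, ?_⟩
    simp only [Set.mem_singleton_iff, Sym2.eq_iff]
    tauto
  by_cases haS : a ∈ S
  · refine ⟨S, hfin, ?_, hcard⟩
    intro u v huv
    by_cases hne1 : u = a ∧ v = b
    · exact Or.inl (hne1.1 ▸ haS)
    by_cases hne2 : u = b ∧ v = a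
    · exact Or.inr (hne2.2 ▸ haS)
    exact hadj' huv hne1 hne2
  by_cases hbS : b ∈ S
  · refine ⟨S, hfin, ?_, hcard⟩
    intro u v huv
    by_cases hne1 : u = a ∧ v = b
    · exact Or.inr (hne1.2 ▸ hbS)
    by_cases hne2 : u = b ∧ v = a
    · exact Or.inl (hne2.1 ▸ hbS)
    exact hadj' huv hne1 hne2
  -- a ∉ S, b ∉ S. The edge {c,a} survives deletion, so c ∈ S.
  have hcS : c ∈ S := by
    have := hadj' h1 (fun h => hca h.1) (fun h => hcb h.1)
    tauto
  -- key: any neighbor x of c with x ≠ a lies in S \ {c}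
  have key : ∀ x : V, G.Adj c x → x ≠ a → x ∈ S \ {c} := by
    intro x hcx hxa
    have hxc : x ≠ c := fun h => G.irrefl (h ▸ hcx)
    rcases hsub hcx with hxa' | hxb'
    · have hxb : x ≠ b := fun h => h2 (h ▸ hcx)
      have := hadj' (hxa'.symm) (fun h => hxa h.1) (fun h => hxb h.1)
      exact ⟨this.resolve_right haS, hxc⟩
    · have hxb : x ≠ b := fun h => G.irrefl (h ▸ hxb' : G.Adj b b)
      have := hadj' (hxb'.symm) (fun h => hxa h.1) (fun h => hxb h.1)
      exact ⟨this.resolve_right hbS, hxc⟩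
  refine ⟨insert a (S \ {c}), (hfin.diff).insert a, ?_, ?_⟩
  · intro u v huv
    by_cases huc : u = c
    · subst huc
      by_cases hva : v = a
      · exact Or.inr (by simp [hva])
      · exact Or.inr (Set.mem_insert_of_mem a (key v huv hva))
    by_cases hvc : v = c
    · subst hvc
      by_cases hua : u = a
      · exact Or.inl (by simp [hua])
      · exact Or.inl (Set.mem_insert_of_mem a (key u (huv.symm) hua))
    by_cases hne1 : u = a ∧ v = b
    · exact Or.inl (by simp [hne1.1])
    by_cases hne2 : u = b ∧ v = a
    · exact Or.inr (by simp [hne2.2])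
    rcases hadj' huv hne1 hne2 with h | h
    · exact Or.inl (Set.mem_insert_of_mem a ⟨h, huc⟩)
    · exact Or.inr (Set.mem_insert_of_mem a ⟨h, hvc⟩)
  · calc (insert a (S \ {c})).ncard ≤ (S \ {c}).ncard + 1 :=
          Set.ncard_insert_le _ _
      _ = S.ncard := Set.ncard_diff_singleton_add_one hcS hfin
      _ ≤ k := hcard

/-- Optional Edge Deletion Rule: if {a,b} is an edge, c is adjacent to exactly one
of a and b, and N(c) ⊆ N(a) ∪ N(b), then the edge {a,b} may be deleted without
changing the budget. -/
theorem optional_edge_deletion_rule {V : Type*} (G : SimpleGraph V) (a b c : V)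
    (k : ℕ) (hab : G.Adj a b) (hca : c ≠ a) (hcb : c ≠ b)
    (hxor : Xor' (G.Adj c a) (G.Adj c b))
    (hsub : G.neighborSet c ⊆ G.neighborSet a ∪ G.neighborSet b) :
    HasVCLE G k ↔ HasVCLE (G.deleteEdges {s(a, b)}) k := by
  constructor
  · rintro ⟨S, hfin, hcov, hcard⟩
    exact ⟨S, hfin, fun u v huv => hcov (SimpleGraph.deleteEdges_adj.1 huv).1,
      hcard⟩
  · rcases hxor with ⟨h1, h2⟩ | ⟨h2, h1⟩
    · exact oed_aux G a b c k hca hcb h1 h2 hsub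
    · have hswap : s(a, b) = s(b, a) := Sym2.eq_swap
      have hsub' : G.neighborSet c ⊆ G.neighborSet b ∪ G.neighborSet a := by
        rw [Set.union_comm]; exact hsub
      rw [hswap]
      exact oed_aux G b a c k hcb hca h2 h1 hsub'
end

section
/- The LP relaxation of Vertex Cover (minimize Σ x_v subject to x_u + x_v ≥ 1 for edges and x_v ≥ 0) always admits a half-integral optimal solution, i.e., an optimal solution x* with x*_v ∈ {0, 1/2, 1} for every vertex v. -/
open SimpleGraph Finset

/-- `x` is a feasible solution of the LP relaxation of Vertex Cover on `G`. -/
def LPFeasible {V : Type*} (G : SimpleGraph V) (x : V → ℝ) : Prop :=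
  (∀ v : V, 0 ≤ x v) ∧ ∀ ⦃u v : V⦄, G.Adj u v → 1 ≤ x u + x v

private lemma round_lemma {V : Type*} [Fintype V] (G : SimpleGraph V) :
    ∀ (n : ℕ) (y : V → ℝ), LPFeasible G y → (∀ v, y v ≤ 1) →
      (univ.filter (fun v => ¬(y v = 0 ∨ y v = 1/2 ∨ y v = 1))).card ≤ n →
      ∃ z : V → ℝ, LPFeasible G z ∧ (∀ v, z v = 0 ∨ z v = 1/2 ∨ z v = 1) ∧
        ∑ v, z v ≤ ∑ v, y v := by
  classical
  intro n
  induction n with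
  | zero =>
    intro y hy hle hcard
    refine ⟨y, hy, ?_, le_refl _⟩
    intro v
    by_contra h
    have hv : v ∈ univ.filter (fun v => ¬(y v = 0 ∨ y v = 1/2 ∨ y v = 1)) := by
      simp only [mem_filter, mem_univ, true_and]; exact h
    have := card_pos.mpr ⟨v, hv⟩
    omega
  | succ n ih =>
    intro y hy hle hcard
    set N := univ.filter (fun v => ¬(y v = 0 ∨ y v = 1/2 ∨ y v = 1)) with hNdef
    by_cases hc : N.card ≤ n
    · exact ih y hy hle hc
    have hNne : N.Nonempty := by rw [← card_pos]; omega
    set A := N.filter (fun v => 1/2 < y v) with hAdef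
    set B := N.filter (fun v => y v < 1/2) with hBdef
    have hA : ∀ v, v ∈ A ↔ (1/2 < y v ∧ y v < 1) := by
      intro v
      simp only [hAdef, hNdef, mem_filter, mem_univ, true_and]
      constructor
      · rintro ⟨h1, h2⟩
        exact ⟨h2, lt_of_le_of_ne (hle v) (by tauto)⟩
      · rintro ⟨h1, h2⟩
        constructor
        · push_neg
          refine ⟨by linarith, by linarith, by linarith⟩
        · exact h1
    have hB : ∀ v, v ∈ B ↔ (0 < y v ∧ y v < 1/2) := by
      intro v
      simp only [hBdef, hNdef, mem_filter, mem_univ, true_and]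
      constructor
      · rintro ⟨h1, h2⟩
        exact ⟨lt_of_le_of_ne (hy.1 v) (by tauto), h2⟩
      · rintro ⟨h1, h2⟩
        constructor
        · push_neg
          refine ⟨by linarith, by linarith, by linarith⟩
        · exact h2
    have hABdisj : Disjoint A B := by
      rw [Finset.disjoint_left]
      intro v hvA hvB
      rw [hA] at hvA; rw [hB] at hvB
      linarith [hvA.1, hvB.2]
    have hABu : A ∪ B = N := by
      apply Finset.Subset.antisymm
      · exact Finset.union_subset (filter_subset _ _) (filter_subset _ _)
      · intro v hv
        have hv' := hv
        simp only [hNdef, mem_filter, mem_univ, true_and] at hv'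
        push_neg at hv'
        rcases lt_or_ge (y v) (1/2) with h | h
        · exact mem_union_right _ (by rw [hB]; exact ⟨lt_of_le_of_ne (hy.1 v) (Ne.symm hv'.1), h⟩)
        · exact mem_union_left _ (by rw [hA]; exact ⟨lt_of_le_of_ne h (Ne.symm hv'.2.1), lt_of_le_of_ne (hle v) hv'.2.2⟩)
    have hABne : (A ∪ B).Nonempty := by rw [hABu]; exact hNne
    have hcardAB : A.card + B.card = N.card := by
      rw [← card_union_of_disjoint hABdisj, hABu]
    rcases le_or_gt B.card A.card with hdir | hdir
    · -- down-shift: decrease A by ε, increase B by ε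
      obtain ⟨v₀, hv₀, hmin⟩ := (A ∪ B).exists_min_image
        (fun v => if 1/2 < y v then y v - 1/2 else 1/2 - y v) hABne
      set ε := (if 1/2 < y v₀ then y v₀ - 1/2 else 1/2 - y v₀) with hεdef
      have hεpos : 0 < ε := by
        rcases mem_union.mp hv₀ with h | h
        · rw [hA] at h; rw [hεdef, if_pos h.1]; linarith [h.1]
        · rw [hB] at h; rw [hεdef, if_neg (by linarith [h.2])]; linarith [h.2]
      have hεA : ∀ v ∈ A, ε ≤ y v - 1/2 := by
        intro v hv
        have := hmin v (mem_union_left _ hv)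
        rw [hA] at hv
        rwa [if_pos hv.1] at this
      have hεB : ∀ v ∈ B, ε ≤ 1/2 - y v := by
        intro v hv
        have := hmin v (mem_union_right _ hv)
        rw [hB] at hv
        rwa [if_neg (by linarith [hv.2])] at this
      set y' := fun v => if v ∈ A then y v - ε else if v ∈ B then y v + ε else y v with hy'def
      have hy'A : ∀ v ∈ A, y' v = y v - ε := by
        intro v hv; simp only [hy'def, if_pos hv]
      have hy'B : ∀ v ∈ B, y' v = y v + ε := by
        intro v hv
        simp only [hy'def, if_neg (disjoint_right.mp hABdisj hv), if_pos hv]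
      have hy'O : ∀ v, v ∉ A → v ∉ B → y' v = y v := by
        intro v h1 h2; simp only [hy'def, if_neg h1, if_neg h2]
      have hhalf : ∀ v, 1/2 ≤ y v → 1/2 ≤ y' v := by
        intro v hv
        by_cases h1 : v ∈ A
        · rw [hy'A v h1]; linarith [hεA v h1]
        by_cases h2 : v ∈ B
        · rw [hB] at h2; linarith [h2.2]
        · rw [hy'O v h1 h2]; exact hv
      have h0' : ∀ v, 0 ≤ y' v := by
        intro v
        by_cases h1 : v ∈ A
        · have := hhalf v (by rw [hA] at h1; linarith [h1.1])
          linarith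
        by_cases h2 : v ∈ B
        · rw [hy'B v h2]; rw [hB] at h2; linarith [h2.1]
        · rw [hy'O v h1 h2]; exact hy.1 v
      have hle' : ∀ v, y' v ≤ 1 := by
        intro v
        by_cases h1 : v ∈ A
        · rw [hy'A v h1]; linarith [hle v]
        by_cases h2 : v ∈ B
        · rw [hy'B v h2]; linarith [hεB v h2]
        · rw [hy'O v h1 h2]; exact hle v
      have hz0 : ∀ v, y v = 0 → y' v = 0 := by
        intro v hv
        rw [hy'O v (by rw [hA]; push_neg; intro h; linarith)
          (by rw [hB]; push_neg; intro h; linarith), hv]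
      have hz1 : ∀ v, y v = 1 → y' v = 1 := by
        intro v hv
        rw [hy'O v (by rw [hA]; push_neg; intro h; linarith)
          (by rw [hB]; push_neg; intro h; linarith), hv]
      -- feasibility
      have hfeas : LPFeasible G y' := by
        refine ⟨h0', ?_⟩
        intro u v huv
        have hsum := hy.2 huv
        -- helper to handle case where one endpoint is < 1/2
        have key : ∀ a b : V, y a < 1/2 → 1 ≤ y a + y b → 1 ≤ y' a + y' b := by
          intro a b ha hab
          have hb2 : 1/2 < y b := by linarith
          by_cases hb1 : y b = 1
          · rw [hz1 b hb1]; linarith [h0' a]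
          · have hbA : b ∈ A := by rw [hA]; exact ⟨hb2, lt_of_le_of_ne (hle b) hb1⟩
            by_cases ha0 : y a = 0
            · exfalso; apply hb1; have := hle b; linarith
            · have haB : a ∈ B := by
                rw [hB]; exact ⟨lt_of_le_of_ne (hy.1 a) (Ne.symm ha0), ha⟩
              rw [hy'A b hbA, hy'B a haB]; linarith
        rcases lt_or_ge (y u) (1/2) with hu | hu
        · exact key u v hu hsum
        rcases lt_or_ge (y v) (1/2) with hv | hv
        · have := key v u hv (by linarith); linarith
        · linarith [hhalf u hu, hhalf v hv]
      -- measure decreases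
      have hy'v₀ : y' v₀ = 1/2 := by
        rcases mem_union.mp hv₀ with h | h
        · rw [hy'A v₀ h, hεdef, if_pos ((hA v₀).mp h).1]; ring
        · rw [hy'B v₀ h, hεdef, if_neg (by linarith [((hB v₀).mp h).2])]; ring
      have hsub : univ.filter (fun v => ¬(y' v = 0 ∨ y' v = 1/2 ∨ y' v = 1)) ⊆ N.erase v₀ := by
        intro v hv
        simp only [mem_filter, mem_univ, true_and] at hv
        push_neg at hv
        rw [mem_erase]
        constructor
        · rintro rfl; exact hv.2.1 hy'v₀
        · by_contra hvN
          simp only [hNdef, mem_filter, mem_univ, true_and, not_not] at hvN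
          have hvA : v ∉ A := by rw [hA]; push_neg; intro h; rcases hvN with h'|h'|h' <;> linarith
          have hvB : v ∉ B := by rw [hB]; push_neg; intro h; rcases hvN with h'|h'|h' <;> linarith
          rw [hy'O v hvA hvB] at hv
          tauto
      have hv₀N : v₀ ∈ N := by rw [← hABu]; exact hv₀
      have hcard' : (univ.filter (fun v => ¬(y' v = 0 ∨ y' v = 1/2 ∨ y' v = 1))).card ≤ n := by
        have h1 := card_le_card hsub
        rw [card_erase_of_mem hv₀N] at h1
        omega
      obtain ⟨z, hz1', hz2', hz3'⟩ := ih y' hfeas hle' hcard'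
      refine ⟨z, hz1', hz2', le_trans hz3' ?_⟩
      -- sum comparison
      have hdiff : ∑ v, (y' v - y v) = (B.card : ℝ) * ε - (A.card : ℝ) * ε := by
        rw [← Finset.sum_subset (subset_univ (A ∪ B))
          (by intro v _ hv
              rw [hy'O v (fun h => hv (mem_union_left _ h)) (fun h => hv (mem_union_right _ h))]
              ring)]
        rw [Finset.sum_union hABdisj]
        have e1 : ∑ v ∈ A, (y' v - y v) = (A.card : ℝ) * (-ε) := by
          have h' : ∀ v ∈ A, y' v - y v = -ε := fun v hv => by rw [hy'A v hv]; ring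
          rw [Finset.sum_congr rfl h', Finset.sum_const, nsmul_eq_mul]
        have e2 : ∑ v ∈ B, (y' v - y v) = (B.card : ℝ) * ε := by
          have h' : ∀ v ∈ B, y' v - y v = ε := fun v hv => by rw [hy'B v hv]; ring
          rw [Finset.sum_congr rfl h', Finset.sum_const, nsmul_eq_mul]
        rw [e1, e2]; ring
      have hsumle : ∑ v, y' v ≤ ∑ v, y v := by
        have h1 : ∑ v, (y' v - y v) ≤ 0 := by
          rw [hdiff]
          have : (B.card : ℝ) ≤ (A.card : ℝ) := by exact_mod_cast hdir
          nlinarith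
        have := Finset.sum_sub_distrib (s := (univ : Finset V)) (f := y') (g := y)
        linarith [this ▸ h1]
      exact hsumle
    · -- up-shift: increase A by ε, decrease B by ε
      obtain ⟨v₀, hv₀, hmin⟩ := (A ∪ B).exists_min_image
        (fun v => if 1/2 < y v then 1 - y v else y v) hABne
      set ε := (if 1/2 < y v₀ then 1 - y v₀ else y v₀) with hεdef
      have hεpos : 0 < ε := by
        rcases mem_union.mp hv₀ with h | h
        · rw [hA] at h; rw [hεdef, if_pos h.1]; linarith [h.2]
        · rw [hB] at h; rw [hεdef, if_neg (by linarith [h.2])]; linarith [h.1]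
      have hεA : ∀ v ∈ A, ε ≤ 1 - y v := by
        intro v hv
        have := hmin v (mem_union_left _ hv)
        rw [hA] at hv
        rwa [if_pos hv.1] at this
      have hεB : ∀ v ∈ B, ε ≤ y v := by
        intro v hv
        have := hmin v (mem_union_right _ hv)
        rw [hB] at hv
        rwa [if_neg (by linarith [hv.2])] at this
      set y' := fun v => if v ∈ A then y v + ε else if v ∈ B then y v - ε else y v with hy'def
      have hy'A : ∀ v ∈ A, y' v = y v + ε := by
        intro v hv; simp only [hy'def, if_pos hv]
      have hy'B : ∀ v ∈ B, y' v = y v - ε := by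
        intro v hv
        simp only [hy'def, if_neg (disjoint_right.mp hABdisj hv), if_pos hv]
      have hy'O : ∀ v, v ∉ A → v ∉ B → y' v = y v := by
        intro v h1 h2; simp only [hy'def, if_neg h1, if_neg h2]
      have h0' : ∀ v, 0 ≤ y' v := by
        intro v
        by_cases h1 : v ∈ A
        · rw [hy'A v h1]; linarith [hy.1 v]
        by_cases h2 : v ∈ B
        · rw [hy'B v h2]; linarith [hεB v h2]
        · rw [hy'O v h1 h2]; exact hy.1 v
      have hle' : ∀ v, y' v ≤ 1 := by
        intro v
        by_cases h1 : v ∈ A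
        · rw [hy'A v h1]; linarith [hεA v h1]
        by_cases h2 : v ∈ B
        · rw [hy'B v h2]; linarith [hle v]
        · rw [hy'O v h1 h2]; exact hle v
      have hmono : ∀ v, v ∉ B → y v ≤ y' v := by
        intro v hvB
        by_cases h1 : v ∈ A
        · rw [hy'A v h1]; linarith
        · rw [hy'O v h1 hvB]
      have hz1 : ∀ v, y v = 1 → y' v = 1 := by
        intro v hv
        rw [hy'O v (by rw [hA]; push_neg; intro h; linarith)
          (by rw [hB]; push_neg; intro h; linarith), hv]
      have hfeas : LPFeasible G y' := by
        refine ⟨h0', ?_⟩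
        intro u v huv
        have hsum := hy.2 huv
        have key : ∀ a b : V, a ∈ B → 1 ≤ y a + y b → 1 ≤ y' a + y' b := by
          intro a b haB hab
          have ha := (hB a).mp haB
          have hb2 : 1/2 < y b := by linarith [ha.2]
          by_cases hb1 : y b = 1
          · rw [hz1 b hb1]; linarith [h0' a]
          · have hbA : b ∈ A := by rw [hA]; exact ⟨hb2, lt_of_le_of_ne (hle b) hb1⟩
            rw [hy'A b hbA, hy'B a haB]; linarith
        by_cases hu : u ∈ B
        · exact key u v hu hsum
        by_cases hv : v ∈ B
        · have := key v u hv (by linarith); linarith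
        · linarith [hmono u hu, hmono v hv]
      have hy'v₀ : y' v₀ = 0 ∨ y' v₀ = 1 := by
        rcases mem_union.mp hv₀ with h | h
        · right; rw [hy'A v₀ h, hεdef, if_pos ((hA v₀).mp h).1]; ring
        · left; rw [hy'B v₀ h, hεdef, if_neg (by linarith [((hB v₀).mp h).2])]; ring
      have hsub : univ.filter (fun v => ¬(y' v = 0 ∨ y' v = 1/2 ∨ y' v = 1)) ⊆ N.erase v₀ := by
        intro v hv
        simp only [mem_filter, mem_univ, true_and] at hv
        push_neg at hv
        rw [mem_erase]
        constructor
        · rintro rfl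
          rcases hy'v₀ with h | h
          · exact hv.1 h
          · exact hv.2.2 h
        · by_contra hvN
          simp only [hNdef, mem_filter, mem_univ, true_and, not_not] at hvN
          have hvA : v ∉ A := by rw [hA]; push_neg; intro h; rcases hvN with h'|h'|h' <;> linarith
          have hvB : v ∉ B := by rw [hB]; push_neg; intro h; rcases hvN with h'|h'|h' <;> linarith
          rw [hy'O v hvA hvB] at hv
          tauto
      have hv₀N : v₀ ∈ N := by rw [← hABu]; exact hv₀
      have hcard' : (univ.filter (fun v => ¬(y' v = 0 ∨ y' v = 1/2 ∨ y' v = 1))).card ≤ n := by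
        have h1 := card_le_card hsub
        rw [card_erase_of_mem hv₀N] at h1
        omega
      obtain ⟨z, hz1', hz2', hz3'⟩ := ih y' hfeas hle' hcard'
      refine ⟨z, hz1', hz2', le_trans hz3' ?_⟩
      have hdiff : ∑ v, (y' v - y v) = (A.card : ℝ) * ε - (B.card : ℝ) * ε := by
        rw [← Finset.sum_subset (subset_univ (A ∪ B))
          (by intro v _ hv
              rw [hy'O v (fun h => hv (mem_union_left _ h)) (fun h => hv (mem_union_right _ h))]
              ring)]
        rw [Finset.sum_union hABdisj]
        have e1 : ∑ v ∈ A, (y' v - y v) = (A.card : ℝ) * ε := by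
          have h' : ∀ v ∈ A, y' v - y v = ε := fun v hv => by rw [hy'A v hv]; ring
          rw [Finset.sum_congr rfl h', Finset.sum_const, nsmul_eq_mul]
        have e2 : ∑ v ∈ B, (y' v - y v) = (B.card : ℝ) * (-ε) := by
          have h' : ∀ v ∈ B, y' v - y v = -ε := fun v hv => by rw [hy'B v hv]; ring
          rw [Finset.sum_congr rfl h', Finset.sum_const, nsmul_eq_mul]
        rw [e1, e2]; ring
      have hsumle : ∑ v, y' v ≤ ∑ v, y v := by
        have h1 : ∑ v, (y' v - y v) ≤ 0 := by
          rw [hdiff]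
          have : (A.card : ℝ) ≤ (B.card : ℝ) := by exact_mod_cast le_of_lt hdir
          nlinarith
        have := Finset.sum_sub_distrib (s := (univ : Finset V)) (f := y') (g := y)
        linarith [this ▸ h1]
      exact hsumle

/-- Nemhauser–Trotter half-integrality: the Vertex Cover LP relaxation always has an
optimal solution with all values in {0, 1/2, 1}. -/
theorem lp_half_integral {V : Type*} [Fintype V] (G : SimpleGraph V) :
    ∃ x : V → ℝ, LPFeasible G x ∧
      (∀ y : V → ℝ, LPFeasible G y → ∑ v, x v ≤ ∑ v, y v) ∧
      ∀ v : V, x v = 0 ∨ x v = 1/2 ∨ x v = 1 := by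
  classical
  set F : (V → Fin 3) → V → ℝ := fun f v => ((f v : ℕ) : ℝ) / 2 with hFdef
  have hFhalf : ∀ (f : V → Fin 3) (v : V), F f v = 0 ∨ F f v = 1/2 ∨ F f v = 1 := by
    intro f v
    have h3 : (f v : ℕ) < 3 := (f v).2
    interval_cases h : (f v : ℕ) <;> simp [hFdef, h]
  set S : Finset (V → Fin 3) := univ.filter (fun f => LPFeasible G (F f)) with hSdef
  have hSne : S.Nonempty := by
    refine ⟨fun _ => (1 : Fin 3), ?_⟩
    simp only [hSdef, mem_filter, mem_univ, true_and]
    constructor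
    · intro v; norm_num [hFdef]
    · intro u v _; norm_num [hFdef]
  obtain ⟨f₀, hf₀S, hf₀min⟩ := S.exists_min_image (fun f => ∑ v, F f v) hSne
  have hf₀feas : LPFeasible G (F f₀) := by
    simp only [hSdef, mem_filter] at hf₀S; exact hf₀S.2
  refine ⟨F f₀, hf₀feas, ?_, hFhalf f₀⟩
  intro y hy
  -- clamp y at 1
  set y₁ : V → ℝ := fun v => min (y v) 1 with hy₁def
  have hy₁feas : LPFeasible G y₁ := by
    constructor
    · intro v; exact le_min (hy.1 v) zero_le_one
    · intro u v huv
      have hsum := hy.2 huv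
      rcases le_or_gt 1 (y u) with h | h
      · have : y₁ u = 1 := min_eq_right h
        have h2 : 0 ≤ y₁ v := le_min (hy.1 v) zero_le_one
        rw [this]; linarith
      rcases le_or_gt 1 (y v) with h' | h'
      · have : y₁ v = 1 := min_eq_right h'
        have h2 : 0 ≤ y₁ u := le_min (hy.1 u) zero_le_one
        rw [this]; linarith
      · rw [hy₁def]
        simp only [min_eq_left (le_of_lt h), min_eq_left (le_of_lt h')]
        exact hsum
  have hy₁le : ∀ v, y₁ v ≤ 1 := fun v => min_le_right _ _
  obtain ⟨z, hzfeas, hzhalf, hzsum⟩ := round_lemma G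
    (univ.filter (fun v => ¬(y₁ v = 0 ∨ y₁ v = 1/2 ∨ y₁ v = 1))).card y₁ hy₁feas hy₁le le_rfl
  -- z is in the image of F
  set f : V → Fin 3 := fun v => if z v = 0 then 0 else if z v = 1/2 then 1 else 2 with hfdef
  have hFf : F f = z := by
    funext v
    rcases hzhalf v with h | h | h
    · simp [hFdef, hfdef, h]
    · rw [hfdef]
      simp only [hFdef]
      rw [if_neg (by rw [h]; norm_num), if_pos h, h]
      norm_num
    · rw [hfdef]
      simp only [hFdef]
      rw [if_neg (by rw [h]; norm_num), if_neg (by rw [h]; norm_num), h]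
      norm_num
  have hfS : f ∈ S := by
    simp only [hSdef, mem_filter, mem_univ, true_and]
    rw [hFf]; exact hzfeas
  have h1 : ∑ v, F f₀ v ≤ ∑ v, F f v := hf₀min f hfS
  have h2 : ∑ v, F f v = ∑ v, z v := by rw [hFf]
  have h3 : ∑ v, y₁ v ≤ ∑ v, y v :=
    Finset.sum_le_sum (fun v _ => min_le_left _ _)
  linarith
end

section
/- Let v be a vertex of a graph G and S ⊆ V(G) any subset. Let G' be obtained from G by adding a new vertex u adjacent to all of S ∪ N[v]. Then G has a vertex cover of size at most k if and only if G' has a vertex cover of size at most k + 1. -/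
open SimpleGraph

/-- The graph obtained from `G` by adding a new vertex (`none`) adjacent to all of
`S ∪ N[v]`. -/
def addDomVertex {V : Type*} (G : SimpleGraph V) (v : V) (S : Set V) :
    SimpleGraph (Option V) where
  Adj x y := match x, y with
    | some x, some y => G.Adj x y
    | some x, none => x ∈ S ∨ x = v ∨ G.Adj v x
    | none, some x => x ∈ S ∨ x = v ∨ G.Adj v x
    | none, none => False
  symm := ⟨fun x y h => by
    cases x <;> cases y
    · exact h
    · exact h
    · exact h
    · exact h.symm⟩
  loopless := ⟨fun x h => by
    cases x
    · exact h
    · exact G.irrefl h⟩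

/-- Backward Domination Rule: adding a new vertex adjacent to `S ∪ N[v]` (for any
vertex `v` and any set `S`) increases the budget by exactly 1. -/
theorem backward_domination_rule {V : Type*} (G : SimpleGraph V) (v : V) (S : Set V)
    (k : ℕ) :
    HasVCLE G k ↔ HasVCLE (addDomVertex G v S) (k + 1) := by
  constructor
  · rintro ⟨C, hfin, hcov, hcard⟩
    refine ⟨insert none (some '' C), (hfin.image _).insert _, ?_, ?_⟩
    · rintro (_|a) (_|b) hab
      · exact absurd hab (by simp [addDomVertex])
      · left; exact Set.mem_insert _ _
      · right; exact Set.mem_insert _ _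
      · rcases hcov hab with h | h
        · exact Or.inl (Set.mem_insert_of_mem _ ⟨a, h, rfl⟩)
        · exact Or.inr (Set.mem_insert_of_mem _ ⟨b, h, rfl⟩)
    · calc (insert none (some '' C)).ncard ≤ (some '' C).ncard + 1 :=
            Set.ncard_insert_le _ _
        _ ≤ k + 1 := by
            rw [Set.ncard_image_of_injective _ (Option.some_injective V)]
            omega
  · rintro ⟨C, hfin, hcov, hcard⟩
    by_cases hn : none ∈ C
    · -- take the preimage, it has size ≤ k
      refine ⟨some ⁻¹' C, hfin.preimage (Option.some_injective V).injOn, ?_, ?_⟩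
      · intro a b hab
        exact hcov (show (addDomVertex G v S).Adj (some a) (some b) from hab)
      · have : (insert none (some '' (some ⁻¹' C))).ncard ≤ C.ncard := by
          apply Set.ncard_le_ncard _ hfin
          rintro x (rfl | ⟨y, hy, rfl⟩)
          · exact hn
          · exact hy
        have h2 : (some ⁻¹' C).ncard + 1 ≤ (insert none (some '' (some ⁻¹' C))).ncard := by
          rw [Set.ncard_insert_of_notMem (by simp) ((hfin.preimage
            (Option.some_injective V).injOn).image _),
            Set.ncard_image_of_injective _ (Option.some_injective V)]
        omega
    · -- none ∉ C : then v and all its neighbors and S are in C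
      have hv : some v ∈ C := by
        rcases hcov (show (addDomVertex G v S).Adj (some v) none from Or.inr (Or.inl rfl))
          with h | h
        · exact h
        · exact absurd h hn
      have hnbr : ∀ x, G.Adj v x → some x ∈ C := by
        intro x hx
        rcases hcov (show (addDomVertex G v S).Adj (some x) none from Or.inr (Or.inr hx))
          with h | h
        · exact h
        · exact absurd h hn
      refine ⟨(some ⁻¹' C) \ {v}, ((hfin.preimage (Option.some_injective V).injOn).diff),
        ?_, ?_⟩
      · intro a b hab
        by_cases ha : a = v
        · right
          exact ⟨hnbr b (by rw [← ha]; exact hab), fun hb => hab.ne (ha.trans hb.symm)⟩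
        by_cases hb : b = v
        · left
          exact ⟨hnbr a (hb ▸ hab.symm), ha⟩
        rcases hcov (show (addDomVertex G v S).Adj (some a) (some b) from hab) with h | h
        · exact Or.inl ⟨h, ha⟩
        · exact Or.inr ⟨h, hb⟩
      · have hpre : (some ⁻¹' C).ncard ≤ C.ncard := by
          have : some '' (some ⁻¹' C) = C := by
            ext x; cases x <;> simp [hn]
          calc (some ⁻¹' C).ncard = (some '' (some ⁻¹' C)).ncard :=
                (Set.ncard_image_of_injective _ (Option.some_injective V)).symm
            _ ≤ C.ncard := le_of_eq (by rw [this])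
        have hvmem : v ∈ some ⁻¹' C := hv
        have hd : ((some ⁻¹' C) \ {v}).ncard + 1 = (some ⁻¹' C).ncard := by
          rw [← Set.ncard_diff_singleton_add_one hvmem
            (hfin.preimage (Option.some_injective V).injOn)]
        omega
end
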